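/- arXiv:1106.1054 — 8 statements merged into one kernel-verified Lean document; each statement's English description precedes it below -/
import Mathlib

section
/- Let m and n be natural numbers with m ≥ 2, n ≥ 2 and gcd(m,n) = 1. Then ∑_{d ∣ m·n} μ(d)·(log d)² = 2·Λ(m)·Λ(n). -/
open ArithmeticFunction
open scoped ArithmeticFunction.Moebius

/-!
As `m` and `n` are coprime, every divisor of `m * n` factors uniquely as `a * b` with `a ∣ m`, `b ∣ n`, and then
`μ (a b) log² (a b) = μ a μ b (log a + log b)²`. Expanding the square, the double sum becomes
`A₂(m) S₀(n) + 2 A₁(m) A₁(n) + S₀(m) A₂(n)` with `S₀(k) = ∑_{d ∣ k} μ d`, `A₁(k) = ∑_{d ∣ k} μ d log d`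
and `A₂(k) = ∑_{d ∣ k} μ d log² d`. For `k ≥ 2` we have `S₀(k) = 0` and `A₁(k) = -Λ k`.
-/

theorem Nat.Coprime.sum_divisors_mul_eq_sum_sum {M : Type*} [AddCommMonoid M] {m n : ℕ}
    (hmn : m.Coprime n) (f : ℕ → M) :
    ∑ d ∈ (m * n).divisors, f d = ∑ a ∈ m.divisors, ∑ b ∈ n.divisors, f (a * b) := by
  rw [hmn.divisors_mul, Finset.sum_map, ← Finset.sum_product']
  exact Finset.sum_attach _ fun p : ℕ × ℕ => f (p.1 * p.2)

namespace ArithmeticFunction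

theorem sum_divisors_moebius_eq_zero {R : Type*} [Ring R] {k : ℕ} (hk : k ≠ 1) :
    ∑ d ∈ k.divisors, (μ d : R) = 0 := by
  have h := congrArg (· k) (coe_moebius_mul_coe_zeta (R := R))
  rwa [coe_mul_zeta_apply, one_apply_ne hk] at h

-- The right side is written as products of an `a`-factor and a `b`-factor, so that it sums
-- over `a ∣ m`, `b ∣ n` to products of divisor sums.
theorem moebius_mul_log_sq_of_coprime {a b : ℕ} (hab : a.Coprime b) :
    (μ (a * b) : ℝ) * Real.log (a * b : ℕ) ^ 2 =
      μ a * Real.log a ^ 2 * μ b + 2 * (μ a * Real.log a * (μ b * Real.log b)) +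
        μ a * (μ b * Real.log b ^ 2) := by
  rcases eq_or_ne a 0 with rfl | ha
  · simp
  rcases eq_or_ne b 0 with rfl | hb
  · simp
  rw [isMultiplicative_moebius.map_mul_of_coprime hab, Nat.cast_mul,
    Real.log_mul (by exact_mod_cast ha) (by exact_mod_cast hb)]
  push_cast
  ring

end ArithmeticFunction

theorem golomb_identity (m n : ℕ) (hm : 2 ≤ m) (hn : 2 ≤ n) (hmn : Nat.Coprime m n) :
    ∑ d ∈ (m * n).divisors, (ArithmeticFunction.moebius d : ℝ) * (Real.log d) ^ 2 =
      2 * ArithmeticFunction.vonMangoldt m * ArithmeticFunction.vonMangoldt n := by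
  have hcop : ∀ a ∈ m.divisors, ∀ b ∈ n.divisors, a.Coprime b := fun a ha b hb =>
    (hmn.coprime_dvd_left (Nat.dvd_of_mem_divisors ha)).coprime_dvd_right
      (Nat.dvd_of_mem_divisors hb)
  rw [hmn.sum_divisors_mul_eq_sum_sum, Finset.sum_congr rfl fun a ha =>
    Finset.sum_congr rfl fun b hb => moebius_mul_log_sq_of_coprime (hcop a ha b hb)]
  simp only [Finset.sum_add_distrib, ← Finset.mul_sum, ← Finset.sum_mul]
  -- `sum_moebius_mul_log_eq` is phrased with `ArithmeticFunction.log`, which unfolds to `Real.log`.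
  have hΛ (k : ℕ) : ∑ d ∈ k.divisors, (μ d : ℝ) * Real.log d = -Λ k := sum_moebius_mul_log_eq
  rw [sum_divisors_moebius_eq_zero (by omega : m ≠ 1),
    sum_divisors_moebius_eq_zero (by omega : n ≠ 1), hΛ, hΛ]
  ring
end

section
/- For every complex number s with Re(s) > 1, the series ∑_{n=1}^∞ (∑_{d ∣ n} μ(d)·(log d)²)/n^s converges absolutely, and its sum equals 2·(ζ'(s)/ζ(s))² − ζ''(s)/ζ(s), where ζ'' denotes the second derivative of the Riemann zeta function. (Note ζ(s) ≠ 0 for Re(s) > 1, and the n = 1 term vanishes.) -/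
/-!
Since `∑_{d ∣ n} μ(d) (log d)²` is the Dirichlet convolution of `(log)² · μ` with `1`, its
Dirichlet series is `L((log)² · μ, s) · ζ(s)`. Differentiating `L(μ, s) = 1/ζ(s)` twice termwise
gives `L((log)² · μ, s) = (1/ζ)''(s) = 2 ζ'(s)²/ζ(s)³ - ζ''(s)/ζ(s)²`, and multiplying by `ζ(s)`
yields the claim.
-/

open ArithmeticFunction LSeries Filter Topology

open scoped LSeries.notation ArithmeticFunction.Moebius

section Reciprocal

variable {𝕜 : Type*} [NontriviallyNormedField 𝕜] {f : 𝕜 → 𝕜} {x : 𝕜}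

theorem iteratedDeriv_two_inv (hf : ∀ᶠ y in 𝓝 x, DifferentiableAt 𝕜 f y)
    (hf' : DifferentiableAt 𝕜 (deriv f) x) (hx : f x ≠ 0) :
    iteratedDeriv 2 (fun y => (f y)⁻¹) x =
      2 * deriv f x ^ 2 / f x ^ 3 - iteratedDeriv 2 f x / f x ^ 2 := by
  have hne : ∀ᶠ y in 𝓝 x, f y ≠ 0 := hf.self_of_nhds.continuousAt.eventually_ne hx
  have hderiv : deriv (fun y => (f y)⁻¹) =ᶠ[𝓝 x] fun y => -deriv f y / f y ^ 2 := by
    filter_upwards [hf, hne] with y hy hy0 using deriv_inv'' hy hy0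
  have hquot : HasDerivAt (fun y => -deriv f y / f y ^ 2)
      ((-deriv (deriv f) x * f x ^ 2 - -deriv f x * (2 * f x ^ 1 * deriv f x)) / (f x ^ 2) ^ 2) x :=
    hf'.hasDerivAt.neg.div (hf.self_of_nhds.hasDerivAt.pow 2) (pow_ne_zero 2 hx)
  rw [iteratedDeriv_succ, iteratedDeriv_one, iteratedDeriv_succ, iteratedDeriv_one,
    hderiv.deriv_eq, hquot.deriv]
  field_simp
  ring

end Reciprocal

theorem LSeries_logPowMul_apply (f : ℕ → ℂ) (m n : ℕ) :
    (logMul^[m] f) n = Complex.log n ^ m * f n := by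
  induction m with
  | zero => simp
  | succ m ih => rw [Function.iterate_succ_apply', logMul, ih, pow_succ]; ring

theorem term_logPowMul_moebius_convolution_one (m : ℕ) (s : ℂ) (n : ℕ) :
    term (logMul^[m] ↗μ ⍟ 1) s n =
      ((∑ d ∈ n.divisors, (μ d : ℝ) * Real.log d ^ m : ℝ) : ℂ) / (n : ℂ) ^ s := by
  rcases eq_or_ne n 0 with rfl | hn
  · simp
  rw [term_of_ne_zero hn, convolution_def]
  simp only [LSeries_logPowMul_apply, Pi.one_apply, mul_one]
  rw [Nat.sum_divisorsAntidiagonal fun a _ => Complex.log a ^ m * (μ a : ℂ)]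
  simp [mul_comm]

theorem abscissaOfAbsConv_moebius_lt_re {s : ℂ} (hs : 1 < s.re) :
    abscissaOfAbsConv ↗μ < s.re := by
  rw [abscissaOfAbsConv_moebius]
  exact_mod_cast hs

theorem LSeries_moebius_eq_inv_riemannZeta {s : ℂ} (hs : 1 < s.re) :
    L ↗μ s = (riemannZeta s)⁻¹ := by
  refine eq_inv_of_mul_eq_one_left ?_
  rw [← LSeries_one_eq_riemannZeta hs, mul_comm]
  exact LSeries_one_mul_Lseries_moebius hs

theorem iteratedDeriv_inv_riemannZeta (m : ℕ) {s : ℂ} (hs : 1 < s.re) :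
    iteratedDeriv m (fun z => (riemannZeta z)⁻¹) s = (-1) ^ m * L (logMul^[m] ↗μ) s := by
  have hL : L ↗μ =ᶠ[𝓝 s] fun z => (riemannZeta z)⁻¹ :=
    eventually_of_mem ((isOpen_lt continuous_const Complex.continuous_re).mem_nhds hs)
      fun z hz => LSeries_moebius_eq_inv_riemannZeta hz
  rw [← hL.iteratedDeriv_eq, LSeries_iteratedDeriv m (abscissaOfAbsConv_moebius_lt_re hs)]

theorem differentiableAt_deriv_riemannZeta {s : ℂ} (hs : s ≠ 1) :
    DifferentiableAt ℂ (deriv riemannZeta) s :=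
  (DifferentiableOn.deriv (fun _ hz => (differentiableAt_riemannZeta hz).differentiableWithinAt)
    isOpen_ne).differentiableAt (isOpen_ne.mem_nhds hs)

theorem Z_series_eq (s : ℂ) (hs : 1 < s.re) :
    Summable (fun n : ℕ =>
      ‖((∑ d ∈ n.divisors, (ArithmeticFunction.moebius d : ℝ) * (Real.log d) ^ 2 : ℝ) : ℂ) /
        (n : ℂ) ^ s‖) ∧
    ∑' n : ℕ, ((∑ d ∈ n.divisors,
        (ArithmeticFunction.moebius d : ℝ) * (Real.log d) ^ 2 : ℝ) : ℂ) / (n : ℂ) ^ s =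
      2 * (deriv riemannZeta s / riemannZeta s) ^ 2 -
        iteratedDeriv 2 riemannZeta s / riemannZeta s := by
  have hs1 : s ≠ 1 := by rintro rfl; simp at hs
  have hζ : riemannZeta s ≠ 0 := riemannZeta_ne_zero_of_one_lt_re hs
  have hF : LSeriesSummable (logMul^[2] ↗μ) s := LSeriesSummable_of_abscissaOfAbsConv_lt_re <|
    absicssaOfAbsConv_logPowMul.symm ▸ abscissaOfAbsConv_moebius_lt_re hs
  have h1 : LSeriesSummable 1 s := LSeriesSummable_one_iff.mpr hs
  simp only [← term_logPowMul_moebius_convolution_one]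
  refine ⟨(hF.convolution h1).norm, ?_⟩
  have hL : L (logMul^[2] ↗μ) s =
      2 * deriv riemannZeta s ^ 2 / riemannZeta s ^ 3 -
        iteratedDeriv 2 riemannZeta s / riemannZeta s ^ 2 := by
    rw [← iteratedDeriv_two_inv
      ((eventually_ne_nhds hs1).mono fun _ => differentiableAt_riemannZeta)
      (differentiableAt_deriv_riemannZeta hs1) hζ, iteratedDeriv_inv_riemannZeta 2 hs]
    ring
  rw [← LSeries, LSeries_convolution' hF h1, LSeries_one_eq_riemannZeta hs, hL]
  field_simp
end

section
/- Define Z(s) := 2·(ζ'(s)/ζ(s))² − ζ''(s)/ζ(s). Let s be a complex number that is not an integer and such that ζ(s) ≠ 0 and ζ(1−s) ≠ 0. Then Z(1−s) + ψ'(s) − (π/2)²/cos²(πs/2) = Z(s) + (ψ(s) − log(2π) − (π/2)·tan(πs/2))² + 2·(ζ'(s)/ζ(s))·(ψ(s) − log(2π) − (π/2)·tan(πs/2)), where ψ(s) = Γ'(s)/Γ(s) is the logarithmic derivative of the Gamma function and ψ'(s) is its derivative. -/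
/-- `Z(s) = 2 (ζ'(s)/ζ(s))² − ζ''(s)/ζ(s)`. -/
noncomputable def Zfun (s : ℂ) : ℂ :=
  2 * (deriv riemannZeta s / riemannZeta s) ^ 2 -
    iteratedDeriv 2 riemannZeta s / riemannZeta s

/-- `ψ(s) = Γ'(s)/Γ(s)`, the logarithmic derivative of the Gamma function. -/
noncomputable def psiFun (s : ℂ) : ℂ := deriv Complex.Gamma s / Complex.Gamma s

/-!
With `F = ζ'/ζ` one has `Z = F² − F'`. Taking logarithmic derivatives in the functional
equation `ζ(1 - s) = χ(s) ζ(s)`, `χ(s) = 2 (2π)^(-s) Γ(s) cos(πs/2)`, gives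
`F(1 - s) = -(g(s) + F(s))` with `g = χ'/χ = ψ - log 2π - (π/2) tan(πs/2)`. This holds on a
neighbourhood of `s`, so it may be differentiated: `F'(1 - s) = g'(s) + F'(s)`, where
`g' = ψ' - (π/2)² / cos²(πs/2)`. Substituting both identities into
`Z(1 - s) = F(1 - s)² - F'(1 - s)` leaves a ring identity.
-/

open Complex Filter Topology
open scoped Real

theorem hasDerivAt_logDeriv {𝕜 : Type*} [NontriviallyNormedField 𝕜] {f : 𝕜 → 𝕜}
    {x : 𝕜}
    (hf : DifferentiableAt 𝕜 f x) (hf' : DifferentiableAt 𝕜 (deriv f) x) (h0 : f x ≠ 0) :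
    HasDerivAt (logDeriv f) (iteratedDeriv 2 f x / f x - logDeriv f x ^ 2) x := by
  have h : HasDerivAt (logDeriv f)
      ((deriv (deriv f) x * f x - deriv f x * deriv f x) / f x ^ 2) x :=
    hf'.hasDerivAt.div hf.hasDerivAt h0
  convert h using 1
  rw [iteratedDeriv_succ, iteratedDeriv_one, logDeriv_apply]
  field_simp

theorem isOpen_integerComplement : IsOpen integerComplement :=
  isClosedEmbedding_intCast.isClosed_range.isOpen_compl

theorem one_sub_mem_integerComplement {s : ℂ} (hs : s ∈ integerComplement) :
    1 - s ∈ integerComplement :=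
  fun ⟨n, hn⟩ => hs ⟨1 - n, by push_cast; linear_combination -hn⟩

theorem ne_neg_natCast_of_mem_integerComplement {s : ℂ} (hs : s ∈ integerComplement)
    (n : ℕ) : s ≠ -n :=
  fun h => hs ⟨-n, by simp [h]⟩

theorem hasDerivAt_pi_mul_div_two (s : ℂ) :
    HasDerivAt (fun t : ℂ => π * t / 2) (π / 2) s := by
  simpa using ((hasDerivAt_id s).const_mul (π : ℂ)).div_const 2

theorem cos_pi_mul_div_two_ne_zero {s : ℂ} (hs : s ∈ integerComplement) :
    cos (π * s / 2) ≠ 0 := by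
  rw [Ne, cos_eq_zero_iff]
  rintro ⟨k, hk⟩
  refine hs ⟨2 * k + 1, mul_left_cancel₀ (ofReal_ne_zero.mpr Real.pi_ne_zero) ?_⟩
  push_cast
  linear_combination -2 * hk

theorem analyticAt_riemannZeta {s : ℂ} (hs : s ≠ 1) : AnalyticAt ℂ riemannZeta s :=
  DifferentiableOn.analyticAt (fun _ hz => (differentiableAt_riemannZeta hz).differentiableWithinAt)
    (isOpen_ne.mem_nhds hs)

theorem analyticAt_Gamma {s : ℂ} (hs : s ∈ integerComplement) : AnalyticAt ℂ Gamma s :=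
  DifferentiableOn.analyticAt
    (fun z hz => (differentiableAt_Gamma z
      (ne_neg_natCast_of_mem_integerComplement hz)).differentiableWithinAt)
    (isOpen_integerComplement.mem_nhds hs)

theorem hasDerivAt_logDeriv_riemannZeta {s : ℂ} (hs : s ≠ 1) (h0 : riemannZeta s ≠ 0) :
    HasDerivAt (logDeriv riemannZeta)
      (iteratedDeriv 2 riemannZeta s / riemannZeta s - logDeriv riemannZeta s ^ 2) s :=
  have hζ := analyticAt_riemannZeta hs
  hasDerivAt_logDeriv hζ.differentiableAt hζ.deriv.differentiableAt h0

theorem Zfun_eq_logDeriv_sq_sub_deriv {s : ℂ} (hs : s ≠ 1) (h0 : riemannZeta s ≠ 0) :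
    Zfun s = logDeriv riemannZeta s ^ 2 - deriv (logDeriv riemannZeta) s := by
  rw [(hasDerivAt_logDeriv_riemannZeta hs h0).deriv, Zfun, logDeriv_apply]
  ring

theorem differentiableAt_psiFun {s : ℂ} (hs : s ∈ integerComplement) :
    DifferentiableAt ℂ psiFun s :=
  have hΓ := analyticAt_Gamma hs
  (hasDerivAt_logDeriv hΓ.differentiableAt hΓ.deriv.differentiableAt
    (Gamma_ne_zero (ne_neg_natCast_of_mem_integerComplement hs))).differentiableAt

noncomputable def zetaOneSubFactor (s : ℂ) : ℂ :=
  2 * (2 * π) ^ (-s) * Gamma s * cos (π * s / 2)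

noncomputable def zetaOneSubFactorLogDeriv (s : ℂ) : ℂ :=
  psiFun s - log (2 * π) - π / 2 * tan (π * s / 2)

theorem riemannZeta_one_sub_eq_mul {s : ℂ} (hs : s ∈ integerComplement) :
    riemannZeta (1 - s) = zetaOneSubFactor s * riemannZeta s :=
  riemannZeta_one_sub (ne_neg_natCast_of_mem_integerComplement hs) (integerComplement.ne_one hs)

theorem zetaOneSubFactor_ne_zero {s : ℂ} (hs : s ∈ integerComplement) :
    zetaOneSubFactor s ≠ 0 := by
  have hΓ := Gamma_ne_zero (ne_neg_natCast_of_mem_integerComplement hs)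
  have hcos := cos_pi_mul_div_two_ne_zero hs
  simp [zetaOneSubFactor, Real.pi_ne_zero, hΓ, hcos]

theorem hasDerivAt_zetaOneSubFactor {s : ℂ} (hs : s ∈ integerComplement) :
    HasDerivAt zetaOneSubFactor (zetaOneSubFactor s * zetaOneSubFactorLogDeriv s) s := by
  have h2π : (2 * π : ℂ) ≠ 0 := by simp [Real.pi_ne_zero]
  have hΓ := differentiableAt_Gamma s (ne_neg_natCast_of_mem_integerComplement hs)
  have hpow : HasDerivAt (fun t : ℂ => (2 * π : ℂ) ^ (-t))
      ((2 * π : ℂ) ^ (-s) * log (2 * π) * -1) s :=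
    (hasDerivAt_neg s).const_cpow (Or.inl h2π)
  have hcos : HasDerivAt (fun t : ℂ => cos (π * t / 2)) (-sin (π * s / 2) * (π / 2)) s :=
    (hasDerivAt_cos _).comp s (hasDerivAt_pi_mul_div_two s)
  have h : HasDerivAt zetaOneSubFactor _ s := ((hpow.const_mul 2).mul hΓ.hasDerivAt).mul hcos
  convert h using 1
  have hΓ0 := Gamma_ne_zero (ne_neg_natCast_of_mem_integerComplement hs)
  have hcos0 := cos_pi_mul_div_two_ne_zero hs
  rw [zetaOneSubFactorLogDeriv, psiFun, tan_eq_sin_div_cos, zetaOneSubFactor, Pi.mul_apply]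
  field_simp
  ring

theorem hasDerivAt_zetaOneSubFactorLogDeriv {s : ℂ} (hs : s ∈ integerComplement) :
    HasDerivAt zetaOneSubFactorLogDeriv
      (deriv psiFun s - (π / 2) ^ 2 / cos (π * s / 2) ^ 2) s := by
  have htan : HasDerivAt (fun t : ℂ => tan (π * t / 2))
      (1 / cos (π * s / 2) ^ 2 * (π / 2)) s :=
    HasDerivAt.comp (h₂ := tan) s (hasDerivAt_tan (cos_pi_mul_div_two_ne_zero hs))
      (hasDerivAt_pi_mul_div_two s)
  have h : HasDerivAt zetaOneSubFactorLogDeriv _ s :=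
    ((differentiableAt_psiFun hs).hasDerivAt.sub_const (log (2 * π))).sub
      (htan.const_mul ((π : ℂ) / 2))
  convert h using 1
  ring

theorem riemannZeta_one_sub_ne_zero {s : ℂ} (hs : s ∈ integerComplement)
    (h0 : riemannZeta s ≠ 0) : riemannZeta (1 - s) ≠ 0 := by
  rw [riemannZeta_one_sub_eq_mul hs]
  exact mul_ne_zero (zetaOneSubFactor_ne_zero hs) h0

theorem logDeriv_riemannZeta_one_sub {s : ℂ} (hs : s ∈ integerComplement)
    (h0 : riemannZeta s ≠ 0) :
    logDeriv riemannZeta (1 - s) = -(zetaOneSubFactorLogDeriv s + logDeriv riemannZeta s) := by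
  have hχ := hasDerivAt_zetaOneSubFactor hs
  have hχ0 := zetaOneSubFactor_ne_zero hs
  have hfe : riemannZeta ∘ (1 - ·) =ᶠ[𝓝 s] fun t => zetaOneSubFactor t * riemannZeta t :=
    eventually_of_mem (isOpen_integerComplement.mem_nhds hs)
      fun t ht => riemannZeta_one_sub_eq_mul ht
  have hcomp := logDeriv_comp (x := s)
    (differentiableAt_riemannZeta (integerComplement.ne_one (one_sub_mem_integerComplement hs)))
    (by fun_prop : DifferentiableAt ℂ (1 - ·) s)
  have hmul := logDeriv_mul s hχ0 h0 hχ.differentiableAt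
    (differentiableAt_riemannZeta (integerComplement.ne_one hs))
  rw [logDeriv_apply zetaOneSubFactor, hχ.deriv, mul_div_cancel_left₀ _ hχ0,
    ← (logDeriv_congr_nhds hfe).eq_of_nhds, hcomp, deriv_const_sub_id'] at hmul
  linear_combination -hmul

theorem eventually_logDeriv_riemannZeta_one_sub {s : ℂ} (hs : s ∈ integerComplement)
    (h0 : riemannZeta s ≠ 0) :
    (fun t => logDeriv riemannZeta (1 - t)) =ᶠ[𝓝 s]
      fun t => -(zetaOneSubFactorLogDeriv t + logDeriv riemannZeta t) := by
  filter_upwards [isOpen_integerComplement.mem_nhds hs,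
    (differentiableAt_riemannZeta (integerComplement.ne_one hs)).continuousAt.eventually_ne h0]
    with t ht ht0
  exact logDeriv_riemannZeta_one_sub ht ht0

theorem deriv_logDeriv_riemannZeta_one_sub {s : ℂ} (hs : s ∈ integerComplement)
    (h0 : riemannZeta s ≠ 0) :
    deriv (logDeriv riemannZeta) (1 - s) =
      deriv zetaOneSubFactorLogDeriv s + deriv (logDeriv riemannZeta) s := by
  have hL : HasDerivAt (fun t => logDeriv riemannZeta (1 - t))
      (deriv (logDeriv riemannZeta) (1 - s) * -1) s :=
    (hasDerivAt_logDeriv_riemannZeta (integerComplement.ne_one (one_sub_mem_integerComplement hs))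
      (riemannZeta_one_sub_ne_zero hs h0)).differentiableAt.hasDerivAt.comp s
      ((hasDerivAt_id s).const_sub 1)
  have hR : HasDerivAt (fun t => -(zetaOneSubFactorLogDeriv t + logDeriv riemannZeta t))
      (-(deriv zetaOneSubFactorLogDeriv s + deriv (logDeriv riemannZeta) s)) s :=
    ((hasDerivAt_zetaOneSubFactorLogDeriv hs).differentiableAt.hasDerivAt.add
      (hasDerivAt_logDeriv_riemannZeta (integerComplement.ne_one hs)
        h0).differentiableAt.hasDerivAt).neg
  have h := (eventually_logDeriv_riemannZeta_one_sub hs h0).deriv_eq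
  rw [hL.deriv, hR.deriv] at h
  linear_combination -h

theorem Z_functional_equation_general (s : ℂ) (hs : ∀ n : ℤ, s ≠ (n : ℂ))
    (h1 : riemannZeta s ≠ 0) :
    Zfun (1 - s) + deriv psiFun s -
        ((Real.pi : ℂ) / 2) ^ 2 / Complex.cos ((Real.pi : ℂ) * s / 2) ^ 2 =
      Zfun s +
        (psiFun s - Complex.log (2 * (Real.pi : ℂ)) -
            ((Real.pi : ℂ) / 2) * Complex.tan ((Real.pi : ℂ) * s / 2)) ^ 2 +
        2 * (deriv riemannZeta s / riemannZeta s) *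
          (psiFun s - Complex.log (2 * (Real.pi : ℂ)) -
            ((Real.pi : ℂ) / 2) * Complex.tan ((Real.pi : ℂ) * s / 2)) := by
  have hs' : s ∈ integerComplement := fun ⟨n, hn⟩ => hs n hn.symm
  rw [Zfun_eq_logDeriv_sq_sub_deriv (integerComplement.ne_one (one_sub_mem_integerComplement hs'))
      (riemannZeta_one_sub_ne_zero hs' h1),
    Zfun_eq_logDeriv_sq_sub_deriv (integerComplement.ne_one hs') h1,
    logDeriv_riemannZeta_one_sub hs' h1, deriv_logDeriv_riemannZeta_one_sub hs' h1,
    (hasDerivAt_zetaOneSubFactorLogDeriv hs').deriv, zetaOneSubFactorLogDeriv, logDeriv_apply]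
  ring

theorem Z_functional_equation (s : ℂ) (hs : ∀ n : ℤ, s ≠ (n : ℂ))
    (h1 : riemannZeta s ≠ 0) (h2 : riemannZeta (1 - s) ≠ 0) :
    Zfun (1 - s) + deriv psiFun s -
        ((Real.pi : ℂ) / 2) ^ 2 / Complex.cos ((Real.pi : ℂ) * s / 2) ^ 2 =
      Zfun s +
        (psiFun s - Complex.log (2 * (Real.pi : ℂ)) -
            ((Real.pi : ℂ) / 2) * Complex.tan ((Real.pi : ℂ) * s / 2)) ^ 2 +
        2 * (deriv riemannZeta s / riemannZeta s) *
          (psiFun s - Complex.log (2 * (Real.pi : ℂ)) -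
            ((Real.pi : ℂ) / 2) * Complex.tan ((Real.pi : ℂ) * s / 2)) :=
  Z_functional_equation_general s hs h1
end

section
/- Let D be a positive odd integer. Then, as the real number σ tends to 1/2 from above, (σ − 1/2) · ∑_{a=⌊D/2⌋+1}^∞ (4a² − D²)^{−σ} tends to 1/4. In other words, the constraint Dirichlet series Q_D has a simple pole at s = 1/2 with residue 1/4. -/
/-!
Writing `4a² - D² = (2a)² - D²`, the series differs from `∑_{a > ⌊D/2⌋} (2a)^(-2σ)` by a
series of nonnegative terms bounded by `D² / (2a)²` uniformly for `σ ≤ 1`, so the difference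
stays bounded as `σ → 1/2⁺` and contributes no pole. The remaining series is
`2^(-2σ)` times a tail of `ζ(2σ)`, and `(2σ - 1) ζ(2σ) → 1`, `2^(-2σ) → 1/2` give the residue
`1/2 · 1/2 = 1/4`.
-/

open Filter Real Set Topology

lemma natCast_rpow_neg_le_one (i : ℕ) {s : ℝ} (hs : 0 ≤ s) : (i : ℝ) ^ (-s) ≤ 1 := by
  rcases i.eq_zero_or_pos with rfl | hi
  · exact_mod_cast zero_rpow_le_one _
  · exact rpow_le_one_of_one_le_of_nonpos (by exact_mod_cast hi) (by linarith)

lemma tendsto_sub_nhdsGT_zero (x : ℝ) : Tendsto (fun s : ℝ => s - x) (𝓝[>] x) (𝓝 0) := by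
  simpa using ((continuous_sub_right x).tendsto x).mono_left nhdsWithin_le_nhds

lemma tendsto_sub_mul_tsum_nat_add_rpow_neg (k : ℕ) :
    Tendsto (fun s : ℝ => (s - 1) * ∑' n : ℕ, ((n + k : ℕ) : ℝ) ^ (-s)) (𝓝[>] 1) (𝓝 1) := by
  have hzeta : Tendsto (fun s : ℝ => (s - 1) * ∑' n : ℕ, (n : ℝ) ^ (-s)) (𝓝[>] 1) (𝓝 1) :=
    tendsto_sub_mul_tsum_nat_rpow.congr fun s => by
      simp_rw [rpow_neg (Nat.cast_nonneg _), one_div]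
  have hhead : Tendsto (fun s : ℝ => (s - 1) * ∑ i ∈ Finset.range k, (i : ℝ) ^ (-s))
      (𝓝[>] 1) (𝓝 0) := by
    refine (tendsto_sub_nhdsGT_zero 1).zero_mul_isBoundedUnder_le
      (isBoundedUnder_of_eventually_le (a := (k : ℝ)) ?_)
    filter_upwards [self_mem_nhdsWithin] with s (hs : 1 < s)
    have hterm : ∀ i ∈ Finset.range k, (i : ℝ) ^ (-s) ≤ 1 :=
      fun i _ => natCast_rpow_neg_le_one i (by linarith)
    rw [Function.comp_apply, norm_of_nonneg (Finset.sum_nonneg fun i _ => by positivity)]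
    simpa using Finset.sum_le_sum hterm
  refine (sub_zero (1 : ℝ) ▸ hzeta.sub hhead).congr' ?_
  filter_upwards [self_mem_nhdsWithin] with s (hs : 1 < s)
  rw [← mul_sub, ← (summable_nat_rpow.2 (by linarith)).sum_add_tsum_nat_add k, add_sub_cancel_left]

lemma four_mul_sq_rpow_neg {y : ℝ} (hy : 0 ≤ y) (σ : ℝ) :
    (4 * y ^ 2) ^ (-σ) = 2 ^ (-(2 * σ)) * y ^ (-(2 * σ)) := by
  rw [show 4 * y ^ 2 = (2 * y) ^ 2 by ring, ← rpow_natCast, ← rpow_mul (by positivity),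
    mul_rpow zero_le_two hy]
  norm_num

lemma summable_four_mul_sq_rpow_neg (k : ℕ) {σ : ℝ} (hσ : 1 / 2 < σ) :
    Summable fun n : ℕ => (4 * ((n + k : ℕ) : ℝ) ^ 2) ^ (-σ) := by
  simp_rw [four_mul_sq_rpow_neg (Nat.cast_nonneg _)]
  exact ((summable_nat_add_iff k).2 (summable_nat_rpow.2 (by linarith))).mul_left _

lemma tendsto_sub_mul_tsum_four_mul_sq_rpow_neg (k : ℕ) :
    Tendsto (fun σ : ℝ => (σ - 1 / 2) * ∑' n : ℕ, (4 * ((n + k : ℕ) : ℝ) ^ 2) ^ (-σ))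
      (𝓝[>] (1 / 2)) (𝓝 (1 / 4)) := by
  have hdouble : Tendsto (fun σ : ℝ => 2 * σ) (𝓝[>] (1 / 2)) (𝓝[>] 1) := by
    have := (continuous_const_mul (2 : ℝ)).continuousWithinAt.tendsto_nhdsWithin
      (x := 1 / 2) (t := Ioi 1) fun σ (hσ : 1 / 2 < σ) => show 1 < 2 * σ by linarith
    rwa [mul_one_div_cancel two_ne_zero] at this
  have hpole := (tendsto_sub_mul_tsum_nat_add_rpow_neg k).comp hdouble
  have hfactor : Tendsto (fun σ : ℝ => (2 : ℝ) ^ (-(2 * σ))) (𝓝[>] (1 / 2)) (𝓝 (1 / 2)) := by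
    have hcont : Continuous fun σ : ℝ => (2 : ℝ) ^ (-(2 * σ)) :=
      continuous_const.rpow (by fun_prop) fun _ => Or.inl two_ne_zero
    simpa [rpow_neg_one] using (hcont.tendsto (1 / 2)).mono_left nhdsWithin_le_nhds
  refine (show (1 / 4 : ℝ) = 1 / 2 * (1 / 2 * 1) by norm_num) ▸
    (hfactor.mul (hpole.const_mul (1 / 2))) |>.congr fun σ => ?_
  simp_rw [Function.comp_apply, four_mul_sq_rpow_neg (Nat.cast_nonneg _), tsum_mul_left]
  ring

lemma rpow_neg_sub_rpow_neg_le {b c σ : ℝ} (hc : 0 ≤ c) (hbc : 1 ≤ b - c) (hσ₀ : 0 ≤ σ)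
    (hσ₁ : σ ≤ 1) : (b - c) ^ (-σ) - b ^ (-σ) ≤ c / b := by
  have hb : 0 < b := by linarith
  have hbc₀ : 0 ≤ b - c := by linarith
  have hq₀ : 0 < (b - c) / b := div_pos (by linarith) hb
  have hq₁ : (b - c) / b ≤ 1 := (div_le_one hb).2 (by linarith)
  have hsplit : b ^ (-σ) = (b - c) ^ (-σ) * ((b - c) / b) ^ σ := by
    rw [div_rpow hbc₀ hb.le, rpow_neg hb.le, rpow_neg hbc₀]
    field_simp [(rpow_pos_of_pos (by linarith : 0 < b - c) σ).ne']
  calc (b - c) ^ (-σ) - b ^ (-σ) = (b - c) ^ (-σ) * (1 - ((b - c) / b) ^ σ) := by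
        rw [hsplit]; ring
    _ ≤ 1 * (1 - (b - c) / b) := by
        refine mul_le_mul (rpow_le_one_of_one_le_of_nonpos hbc (by linarith)) ?_ ?_ zero_le_one
        · have := rpow_le_rpow_of_exponent_ge hq₀ hq₁ hσ₁
          rw [rpow_one] at this
          linarith
        · linarith [rpow_le_one hq₀.le hq₁ hσ₀]
    _ = c / b := by field_simp; ring

lemma abs_tsum_rpow_neg_sub_tsum_rpow_neg_le {b : ℕ → ℝ} {c σ : ℝ} (hc : 0 ≤ c)
    (hbc : ∀ n, 1 ≤ b n - c) (hσ₀ : 0 ≤ σ) (hσ₁ : σ ≤ 1) (hb : Summable fun n => b n ^ (-σ))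
    (hb_inv : Summable fun n => (b n)⁻¹) :
    |∑' n, (b n - c) ^ (-σ) - ∑' n, b n ^ (-σ)| ≤ c * ∑' n, (b n)⁻¹ := by
  have hdiff_nonneg : ∀ n, 0 ≤ (b n - c) ^ (-σ) - b n ^ (-σ) := fun n =>
    sub_nonneg.2 (rpow_le_rpow_of_nonpos (by linarith [hbc n]) (by linarith) (by linarith))
  have hdiff_le : ∀ n, (b n - c) ^ (-σ) - b n ^ (-σ) ≤ c * (b n)⁻¹ := fun n =>
    (rpow_neg_sub_rpow_neg_le hc (hbc n) hσ₀ hσ₁).trans_eq (div_eq_mul_inv _ _)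
  have hdiff := (hb_inv.mul_left c).of_nonneg_of_le hdiff_nonneg hdiff_le
  rw [← (by simpa using hdiff.add hb : Summable fun n => (b n - c) ^ (-σ)).tsum_sub hb,
    ← tsum_mul_left, abs_of_nonneg (tsum_nonneg hdiff_nonneg)]
  exact hdiff.tsum_le_tsum hdiff_le (hb_inv.mul_left c)

theorem QD_simple_pole_half_general (D : ℕ) :
    Filter.Tendsto (fun σ : ℝ => (σ - 1 / 2) *
        ∑' a : ℕ, (4 * ((a + D / 2 + 1 : ℕ) : ℝ) ^ 2 - (D : ℝ) ^ 2) ^ (-σ))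
      (nhdsWithin (1 / 2) (Set.Ioi (1 / 2))) (nhds (1 / 4)) := by
  set b : ℕ → ℝ := fun a => 4 * ((a + D / 2 + 1 : ℕ) : ℝ) ^ 2
  have hpole : Tendsto (fun σ : ℝ => (σ - 1 / 2) * ∑' a, b a ^ (-σ)) (𝓝[>] (1 / 2)) (𝓝 (1 / 4)) :=
    tendsto_sub_mul_tsum_four_mul_sq_rpow_neg (D / 2 + 1)
  have hb : ∀ σ : ℝ, 1 / 2 < σ → Summable fun a => b a ^ (-σ) := fun _ hσ =>
    summable_four_mul_sq_rpow_neg (D / 2 + 1) hσ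
  have hgap : ∀ a, 1 ≤ b a - (D : ℝ) ^ 2 := fun a => by
    have : (D : ℝ) + 1 ≤ 2 * ((a + D / 2 + 1 : ℕ) : ℝ) := by exact_mod_cast (by omega)
    nlinarith
  have hbounded : IsBoundedUnder (· ≤ ·) (𝓝[>] (1 / 2)) fun σ : ℝ =>
      ‖∑' a, (b a - (D : ℝ) ^ 2) ^ (-σ) - ∑' a, b a ^ (-σ)‖ := by
    refine isBoundedUnder_of_eventually_le (a := (D : ℝ) ^ 2 * ∑' a, (b a)⁻¹) ?_
    filter_upwards [Ioc_mem_nhdsGT (by norm_num : (1 / 2 : ℝ) < 1)] with σ ⟨hσ₀, hσ₁⟩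
    exact abs_tsum_rpow_neg_sub_tsum_rpow_neg_le (sq_nonneg _) hgap (by linarith) hσ₁ (hb σ hσ₀)
      ((hb 1 (by norm_num)).congr fun a => rpow_neg_one _)
  refine (add_zero (1 / 4 : ℝ) ▸ hpole.add
    ((tendsto_sub_nhdsGT_zero _).zero_mul_isBoundedUnder_le hbounded)).congr fun σ => ?_
  ring

theorem QD_simple_pole_half (D : ℕ) (hD : 0 < D) (hodd : Odd D) :
    Filter.Tendsto (fun σ : ℝ => (σ - 1 / 2) *
        ∑' a : ℕ, (4 * ((a + D / 2 + 1 : ℕ) : ℝ) ^ 2 - (D : ℝ) ^ 2) ^ (-σ))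
      (nhdsWithin (1 / 2) (Set.Ioi (1 / 2))) (nhds (1 / 4)) :=
  QD_simple_pole_half_general D
end

section
/- Let a, b : ℕ → ℂ and let σ_a, σ_b be real numbers such that ∑_{m=1}^∞ |a_m|·m^{−x} converges for every real x > σ_a and ∑_{n=1}^∞ |b_n|·n^{−x} converges for every real x > σ_b. Set f(s) = ∑_{m=1}^∞ a_m·m^{−s} and g(s) = ∑_{n=1}^∞ b_n·n^{−s}. Let σ be a real number with σ > σ_a + 1 and let w be a complex number with Re(w) > σ + σ_b. Then ∑_{l=1}^∞ |a_l·b_l|·l^{−Re(w)} converges, and lim_{T→∞} (1/(2T)) ∫_{−T}^{T} f(σ+it)·g(w−σ−it) dt exists and equals ∑_{l=1}^∞ a_l·b_l·l^{−w}. -/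
/-!
Expanding both absolutely convergent series, the integrand becomes the absolutely convergent
trigonometric series `∑_{m,n} c_{m,n} e^{i t (log n - log m)}` with
`c_{m,n} = a_m m^{-σ} b_n n^{σ-w}`. Averaging over `[-T, T]` replaces each exponential by
`sinc (T (log n - log m))`, which is bounded by `1` and tends to `0` unless `m = n`, so by
dominated convergence only the diagonal `∑ a_l b_l l^{-w}` survives.
-/

open Filter Topology Complex MeasureTheory

theorem integral_exp_mul_I_eq_two_mul_sinc (θ T : ℝ) :
    ∫ t in (-T)..T, exp (t * θ * I) = 2 * T * Real.sinc (T * θ) := by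
  rcases eq_or_ne θ 0 with rfl | hθ
  · simp only [ofReal_zero, mul_zero, zero_mul, exp_zero, intervalIntegral.integral_const,
      Real.sinc_zero, real_smul]
    push_cast; ring
  rcases eq_or_ne T 0 with rfl | hT
  · simp
  have hθ' : (θ : ℂ) ≠ 0 := ofReal_ne_zero.2 hθ
  have hT' : (T : ℂ) ≠ 0 := ofReal_ne_zero.2 hT
  have hc : (θ : ℂ) * I ≠ 0 := mul_ne_zero hθ' I_ne_zero
  simp_rw [show ∀ t : ℝ, (t : ℂ) * θ * I = θ * I * t from fun t => by ring]
  rw [integral_exp_mul_complex hc, Real.sinc_of_ne_zero (mul_ne_zero hT hθ)]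
  push_cast
  rw [sin]
  field_simp
  ring_nf
  rw [I_sq]
  ring

theorem tendsto_sinc_mul_atTop (θ : ℝ) :
    Tendsto (fun T => Real.sinc (T * θ)) atTop (𝓝 (if θ = 0 then 1 else 0)) := by
  rcases eq_or_ne θ 0 with rfl | hθ
  · simp
  rw [if_neg hθ]
  have hinv : Tendsto (fun T => (T * |θ|)⁻¹) atTop (𝓝 0) :=
    tendsto_inv_atTop_zero.comp (tendsto_id.atTop_mul_const (abs_pos.2 hθ))
  refine squeeze_zero_norm' ?_ hinv
  filter_upwards [eventually_gt_atTop 0] with T hT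
  rw [Real.norm_eq_abs, Real.sinc_of_ne_zero (mul_ne_zero hT.ne' hθ), abs_div, abs_mul,
    abs_of_pos hT, div_eq_mul_inv]
  exact mul_le_of_le_one_left (by positivity) (Real.abs_sin_le_one _)

section TrigonometricSeries

variable {ι : Type*} [Countable ι] {c : ι → ℂ} (θ : ι → ℝ)

theorem integral_tsum_mul_exp_mul_I (hc : Summable (‖c ·‖)) (T : ℝ) :
    ∫ t in (-T)..T, ∑' i, c i * exp (t * θ i * I) = 2 * T * ∑' i, c i * Real.sinc (T * θ i) := by
  have hnorm (i : ι) (t : ℝ) : ‖c i * exp (t * θ i * I)‖ = ‖c i‖ := by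
    rw [norm_mul, ← ofReal_mul, norm_exp_ofReal_mul_I, mul_one]
  have hsum := intervalIntegral.hasSum_integral_of_dominated_convergence (μ := volume) (a := -T)
    (b := T) (F := fun i (t : ℝ) => c i * exp (t * θ i * I))
    (f := fun t => ∑' i, c i * exp (t * θ i * I)) (fun i _ => ‖c i‖)
    (fun i => by fun_prop) ?_ ?_ ?_ ?_
  · simp_rw [← hsum.tsum_eq, intervalIntegral.integral_const_mul,
      integral_exp_mul_I_eq_two_mul_sinc, ← tsum_mul_left]
    exact tsum_congr fun i => by ring
  · exact fun i => ae_of_all _ fun t _ => (hnorm i t).le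
  · exact ae_of_all _ fun _ _ => hc
  · exact intervalIntegrable_const
  · exact ae_of_all _ fun t _ => (hc.of_norm_bounded fun i => (hnorm i t).le).hasSum

theorem tendsto_mean_tsum_mul_exp_mul_I (hc : Summable (‖c ·‖)) :
    Tendsto (fun T : ℝ => 1 / (2 * (T : ℂ)) * ∫ t in (-T)..T, ∑' i, c i * exp (t * θ i * I))
      atTop (𝓝 (∑' i, if θ i = 0 then c i else 0)) := by
  have hmean : Tendsto (fun T : ℝ => ∑' i, c i * Real.sinc (T * θ i)) atTop
      (𝓝 (∑' i, if θ i = 0 then c i else 0)) := by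
    refine tendsto_tsum_of_dominated_convergence hc (fun i => ?_) (.of_forall fun T i => ?_)
    · have := ((continuous_ofReal.tendsto _).comp (tendsto_sinc_mul_atTop (θ i))).const_mul (c i)
      split_ifs at this ⊢ <;> simpa using this
    · rw [norm_mul, norm_real, Real.norm_eq_abs]
      exact mul_le_of_le_one_right (norm_nonneg _) (Real.abs_sinc_le_one _)
  refine hmean.congr' ?_
  filter_upwards [eventually_ne_atTop 0] with T hT
  rw [integral_tsum_mul_exp_mul_I θ hc]
  field_simp [ofReal_ne_zero.2 hT]

end TrigonometricSeries

theorem tsum_ite_fst_eq_snd {α M : Type*} [DecidableEq α] [AddCommMonoid M] [TopologicalSpace M]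
    (f : α × α → M) : ∑' p : α × α, (if p.1 = p.2 then f p else 0) = ∑' x, f (x, x) := by
  refine (Function.diag_injective.tsum_eq fun p hp => ?_).symm.trans
    (tsum_congr fun x => if_pos rfl)
  by_cases h : p.1 = p.2
  · exact ⟨p.1, Prod.ext rfl h⟩
  · exact absurd (if_neg h) hp

section DirichletSeries

theorem norm_div_natCast_cpow (x : ℂ) {n : ℕ} (hn : 0 < n) (s : ℂ) :
    ‖x / (n : ℂ) ^ s‖ = ‖x‖ / (n : ℝ) ^ s.re := by
  rw [norm_div, norm_natCast_cpow_of_pos hn]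

theorem summable_norm_div_natCast_succ_cpow {f : ℕ → ℂ} {x : ℝ}
    (hf : Summable fun m : ℕ => ‖f (m + 1)‖ / ((m + 1 : ℕ) : ℝ) ^ x) {s : ℂ} (hs : s.re = x) :
    Summable fun m : ℕ => ‖f (m + 1) / ((m + 1 : ℕ) : ℂ) ^ s‖ :=
  hf.congr fun m => by rw [norm_div_natCast_cpow _ m.add_one_pos, hs]

theorem div_natCast_cpow_mul_div_natCast_cpow (x y : ℂ) {n : ℕ} (hn : n ≠ 0) (s u : ℂ) :
    x / (n : ℂ) ^ s * (y / (n : ℂ) ^ u) = x * y / (n : ℂ) ^ (s + u) := by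
  rw [cpow_add _ _ (Nat.cast_ne_zero.2 hn), mul_div_mul_comm]

theorem div_natCast_cpow_mul_div_natCast_cpow_exp (x y : ℂ) {m n : ℕ} (hm : m ≠ 0) (hn : n ≠ 0)
    (s u : ℂ) (t : ℝ) :
    x / (m : ℂ) ^ (s + t * I) * (y / (n : ℂ) ^ (u - t * I))
      = x / (m : ℂ) ^ s * (y / (n : ℂ) ^ u) *
        exp (t * ((Real.log n - Real.log m : ℝ) : ℂ) * I) := by
  have hm' : (m : ℂ) ≠ 0 := Nat.cast_ne_zero.2 hm
  have hn' : (n : ℂ) ≠ 0 := Nat.cast_ne_zero.2 hn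
  rw [cpow_add _ _ hm', cpow_sub _ _ hn', cpow_def_of_ne_zero hm' (t * I),
    cpow_def_of_ne_zero hn' (t * I), ofReal_sub, natCast_log, natCast_log]
  rw [show (t : ℂ) * (log n - log m) * I = log n * (t * I) - log m * (t * I) by ring, exp_sub]
  field_simp

theorem log_natCast_succ_sub_eq_zero_iff (m n : ℕ) :
    Real.log ((n + 1 : ℕ) : ℝ) - Real.log ((m + 1 : ℕ) : ℝ) = 0 ↔ m = n := by
  rw [sub_eq_zero, Real.log_injOn_pos.eq_iff (by simp; positivity) (by simp; positivity),
    Nat.cast_inj, add_left_inj, eq_comm]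

end DirichletSeries

theorem dirichlet_product_formula (a b : ℕ → ℂ) (σa σb : ℝ)
    (ha : ∀ x : ℝ, σa < x → Summable (fun m : ℕ => ‖a (m + 1)‖ / ((m + 1 : ℕ) : ℝ) ^ x))
    (hb : ∀ x : ℝ, σb < x → Summable (fun n : ℕ => ‖b (n + 1)‖ / ((n + 1 : ℕ) : ℝ) ^ x))
    (σ : ℝ) (hσ : σa + 1 < σ) (w : ℂ) (hw : σ + σb < w.re) :
    Summable (fun l : ℕ => ‖a (l + 1) * b (l + 1)‖ / ((l + 1 : ℕ) : ℝ) ^ w.re) ∧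
    Tendsto (fun T : ℝ => 1 / (2 * (T : ℂ)) * ∫ t in (-T)..T,
        (∑' m : ℕ, a (m + 1) / ((m + 1 : ℕ) : ℂ) ^ ((σ : ℂ) + (t : ℂ) * Complex.I)) *
        (∑' n : ℕ, b (n + 1) / ((n + 1 : ℕ) : ℂ) ^ (w - (σ : ℂ) - (t : ℂ) * Complex.I)))
      atTop (nhds (∑' l : ℕ, a (l + 1) * b (l + 1) / ((l + 1 : ℕ) : ℂ) ^ w)) := by
  have hA {s : ℂ} (hs : s.re = σ) := summable_norm_div_natCast_succ_cpow (ha σ (by linarith)) hs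
  have hB {s : ℂ} (hs : s.re = w.re - σ) :=
    summable_norm_div_natCast_succ_cpow (hb (w.re - σ) (by linarith)) hs
  set c : ℕ × ℕ → ℂ := fun p => a (p.1 + 1) / ((p.1 + 1 : ℕ) : ℂ) ^ (σ : ℂ) *
    (b (p.2 + 1) / ((p.2 + 1 : ℕ) : ℂ) ^ (w - σ))
  set θ : ℕ × ℕ → ℝ := fun p => Real.log ((p.2 + 1 : ℕ) : ℝ) - Real.log ((p.1 + 1 : ℕ) : ℝ)
  have hc : Summable (‖c ·‖) :=
    ((hA (s := σ) (by simp)).mul_norm (hB (s := w - σ) (by simp)) :)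
  have hdiag (l : ℕ) : c (l, l) = a (l + 1) * b (l + 1) / ((l + 1 : ℕ) : ℂ) ^ w := by
    simp only [c, div_natCast_cpow_mul_div_natCast_cpow _ _ l.add_one_ne_zero, add_sub_cancel]
  have hfactor (t : ℝ) :
      (∑' m : ℕ, a (m + 1) / ((m + 1 : ℕ) : ℂ) ^ ((σ : ℂ) + t * I)) *
        (∑' n : ℕ, b (n + 1) / ((n + 1 : ℕ) : ℂ) ^ (w - σ - t * I))
      = ∑' p, c p * exp (t * θ p * I) := by
    rw [tsum_mul_tsum_of_summable_norm (hA (by simp)) (hB (by simp))]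
    exact tsum_congr fun p => div_natCast_cpow_mul_div_natCast_cpow_exp _ _
      p.1.add_one_ne_zero p.2.add_one_ne_zero _ _ t
  refine ⟨(hc.comp_injective Function.diag_injective).congr fun l => ?_, ?_⟩
  · rw [Function.comp_apply, Function.diag, hdiag, norm_div_natCast_cpow _ l.add_one_pos]
  · simp_rw [hfactor]
    convert tendsto_mean_tsum_mul_exp_mul_I θ hc using 2
    simp_rw [θ, log_natCast_succ_sub_eq_zero_iff, tsum_ite_fst_eq_snd, hdiag]
end

section
/- Let n ≥ 2 be a natural number. If n has exactly one distinct prime factor p (i.e. n = p^k for some k ≥ 1), then ∑_{d ∣ n} μ(d)·(log d)² = −(log p)². If n has exactly two distinct prime factors p and q, then ∑_{d ∣ n} μ(d)·(log d)² = 2·(log p)·(log q). If n has at least three distinct prime factors, then ∑_{d ∣ n} μ(d)·(log d)² = 0. -/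
/-!
Only squarefree divisors contribute, and these are the products `∏ p ∈ t, p` over subsets `t` of
the set `P` of prime factors of `n`, with `μ = (-1) ^ #t` and `log d = ∑ p ∈ t, log p`. So the sum
is the alternating sum over `t ⊆ P` of the square of the linear form `∑ p ∈ t, log p`. Adding a
new element `a` to `P` turns such an alternating sum of `f t` into one of `f t - f (insert a t)`,
which lowers the degree of a polynomial in `∑ p ∈ t, x p` by one; hence alternating sums of
`(∑ p ∈ t, x p) ^ k` vanish for `k < #P`, which gives `0` once `#P ≥ 3`. For `#P ≤ 2` the sum
is computed directly.
-/

open Finset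

namespace Finset

variable {α R : Type*} [DecidableEq α] [CommRing R]

theorem sum_powerset_insert_neg_one_pow_card_mul (f : Finset α → R) {a : α} {s : Finset α}
    (ha : a ∉ s) :
    ∑ t ∈ (insert a s).powerset, (-1) ^ #t * f t =
      ∑ t ∈ s.powerset, (-1) ^ #t * (f t - f (insert a t)) := by
  rw [sum_powerset_insert ha, ← sum_add_distrib]
  refine sum_congr rfl fun t ht ↦ ?_
  rw [card_insert_of_notMem fun hat ↦ ha (mem_powerset.mp ht hat), pow_succ]
  ring

theorem sum_powerset_neg_one_pow_card_mul_sum_pow_eq_zero (x : α → R) {s : Finset α} {k : ℕ}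
    (hk : k < #s) : ∑ t ∈ s.powerset, (-1) ^ #t * (∑ i ∈ t, x i) ^ k = 0 := by
  induction s using Finset.induction_on generalizing k with
  | empty => simp at hk
  | insert a s ha ih =>
    rw [card_insert_of_notMem ha] at hk
    have hdiff : ∀ y : R, y ^ k - (x a + y) ^ k =
        -∑ j ∈ range k, (k.choose j * x a ^ (k - j)) * y ^ j := by
      intro y
      rw [add_comm, add_pow, sum_range_succ]
      simp only [Nat.choose_self, Nat.sub_self, pow_zero, Nat.cast_one, mul_one, mul_comm,
        mul_assoc]
      ring
    have hsum : ∀ t ∈ s.powerset, ∑ i ∈ insert a t, x i = x a + ∑ i ∈ t, x i :=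
      fun t ht ↦ sum_insert fun hat ↦ ha (mem_powerset.mp ht hat)
    calc ∑ t ∈ (insert a s).powerset, (-1) ^ #t * (∑ i ∈ t, x i) ^ k
        = -∑ j ∈ range k, (k.choose j * x a ^ (k - j)) *
            ∑ t ∈ s.powerset, (-1) ^ #t * (∑ i ∈ t, x i) ^ j := by
          simp only [sum_powerset_insert_neg_one_pow_card_mul _ ha, mul_sum, ← sum_neg_distrib]
          rw [sum_comm]
          refine sum_congr rfl fun t ht ↦ ?_
          rw [hsum t ht, hdiff, mul_neg, mul_sum, ← sum_neg_distrib]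
          refine sum_congr rfl fun j _ ↦ ?_
          ring
      _ = 0 := by
          rw [sum_eq_zero fun j hj ↦ by rw [ih (by have := mem_range.mp hj; omega), mul_zero],
            neg_zero]

theorem sum_powerset_singleton_neg_one_pow_card_mul_sum_sq (x : α → R) (p : α) :
    ∑ t ∈ ({p} : Finset α).powerset, (-1) ^ #t * (∑ i ∈ t, x i) ^ 2 = -x p ^ 2 := by
  rw [← insert_empty, sum_powerset_insert_neg_one_pow_card_mul _ (notMem_empty p)]
  simp

theorem sum_powerset_pair_neg_one_pow_card_mul_sum_sq (x : α → R) {p q : α} (hpq : p ≠ q) :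
    ∑ t ∈ ({p, q} : Finset α).powerset, (-1) ^ #t * (∑ i ∈ t, x i) ^ 2 = 2 * x p * x q := by
  rw [sum_powerset_insert_neg_one_pow_card_mul _ (notMem_singleton.2 hpq), ← insert_empty,
    sum_powerset_insert_neg_one_pow_card_mul _ (notMem_empty q)]
  simp [hpq]
  ring

end Finset

theorem ArithmeticFunction.moebius_prod_of_prime {t : Finset ℕ} (ht : ∀ p ∈ t, p.Prime) :
    ArithmeticFunction.moebius (∏ p ∈ t, p) = (-1) ^ #t := by
  rw [isMultiplicative_moebius.map_prod_of_prime t ht,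
    prod_congr rfl fun p hp ↦ moebius_apply_prime (ht p hp), prod_const]

theorem Nat.sum_divisors_moebius_mul_eq_sum_powerset {R : Type*} [CommRing R] (f : ℕ → R)
    {n : ℕ} (hn : n ≠ 0) :
    ∑ d ∈ n.divisors, (ArithmeticFunction.moebius d : R) * f d =
      ∑ t ∈ n.primeFactors.powerset, (-1) ^ #t * f (∏ p ∈ t, p) := by
  classical
  have hnonsq :
      ∑ d ∈ n.divisors with ¬Squarefree d, (ArithmeticFunction.moebius d : R) * f d = 0 :=
    sum_eq_zero fun d hd ↦ by
      rw [ArithmeticFunction.moebius_eq_zero_of_not_squarefree (mem_filter.mp hd).2,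
        Int.cast_zero, zero_mul]
  rw [← sum_filter_add_sum_filter_not _ Squarefree, hnonsq, add_zero,
    sum_divisors_filter_squarefree hn, factors_eq]
  refine sum_congr rfl fun t ht ↦ ?_
  have hprime : ∀ p ∈ t, p.Prime := fun p hp ↦ prime_of_mem_primeFactors (mem_powerset.mp ht hp)
  rw [prod_val, Function.id_def, ArithmeticFunction.moebius_prod_of_prime hprime]
  push_cast
  rfl

theorem mulog2_cases (n : ℕ) (hn : 2 ≤ n) :
    (∀ p : ℕ, n.primeFactors = {p} →
      ∑ d ∈ n.divisors, (ArithmeticFunction.moebius d : ℝ) * (Real.log d) ^ 2 =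
        -(Real.log p) ^ 2) ∧
    (∀ p q : ℕ, p ≠ q → n.primeFactors = {p, q} →
      ∑ d ∈ n.divisors, (ArithmeticFunction.moebius d : ℝ) * (Real.log d) ^ 2 =
        2 * Real.log p * Real.log q) ∧
    (3 ≤ n.primeFactors.card →
      ∑ d ∈ n.divisors, (ArithmeticFunction.moebius d : ℝ) * (Real.log d) ^ 2 = 0) := by
  have hsum : ∑ d ∈ n.divisors, (ArithmeticFunction.moebius d : ℝ) * (Real.log d) ^ 2 =
      ∑ t ∈ n.primeFactors.powerset, (-1) ^ #t * (∑ p ∈ t, Real.log p) ^ 2 := by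
    rw [Nat.sum_divisors_moebius_mul_eq_sum_powerset _ (by omega)]
    refine sum_congr rfl fun t ht ↦ ?_
    rw [Nat.cast_prod, Real.log_prod fun p hp ↦ ?_]
    exact Nat.cast_ne_zero.mpr (Nat.prime_of_mem_primeFactors (mem_powerset.mp ht hp)).ne_zero
  rw [hsum]
  refine ⟨fun p hp ↦ ?_, fun p q hpq hP ↦ ?_, fun hcard ↦ ?_⟩
  · rw [hp, sum_powerset_singleton_neg_one_pow_card_mul_sum_sq]
  · rw [hP, sum_powerset_pair_neg_one_pow_card_mul_sum_sq _ hpq]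
  · exact sum_powerset_neg_one_pow_card_mul_sum_pow_eq_zero _ hcard
end

section
/- Let D be a positive odd integer and let w be a complex number with Re(w) > 1/2. Then ∑_{n>⌊D/2⌋} (2n)^{−2w} ∑_{d ∣ 4n²} μ(d)·(log d)² = −2·log 2·[ (2^{2w}−1)^{−1}·( ζ'(2w)/ζ(2w) + log 2/(2^{2w}−1) ) + ∑_{(j,k,p)} (log p)·2^{−2(j+1)w}·p^{−2kw} ] − (log 2)²·[ (2^{2w}−1)^{−1} − ∑_{j≥0, 2^j ≤ ⌊D/2⌋} 2^{−2(j+1)w} ], where the sum ∑_{(j,k,p)} ranges over all triples with p an odd prime, j ≥ 0, k ≥ 1 and 2^j·p^k ≤ ⌊D/2⌋. (Note ζ(2w) ≠ 0 and 2^{2w} ≠ 1 since Re(2w) > 1.) -/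
/-- `∑_{d ∣ n} μ(d) (log d)²`. -/
noncomputable def mulog2 (n : ℕ) : ℝ :=
  ∑ d ∈ n.divisors, (ArithmeticFunction.moebius d : ℝ) * (Real.log d) ^ 2

/-!
Write `m = 2^j q` with `q` odd. The squarefree divisors of `4 m²` are the `e` and `2 e` with
`e ∣ q`, so `∑_{d ∣ 4m²} μ(d) log² d = ∑_{e ∣ q} μ(e) (log² e - log² (2e))`, which equals
`2 log 2 · Λ(q) - (log 2)² [q = 1]` by `∑_{e ∣ q} μ(e) = [q = 1]` and
`∑_{e ∣ q} μ(e) log e = -Λ(q)`. Summed against `(2m)^{-s}`, both pieces factor as the geometric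
series `∑_j 2^{-(j+1)s} = (2^s - 1)⁻¹` times an odd-indexed Dirichlet series; for `Λ` the odd part
of `-ζ'/ζ` is obtained by removing the even part `log 2 / (2^s - 1)`. The tail over
`m > ⌊D/2⌋` is the full series minus its first terms, which live on `m = 2^j p^k` (`p` an odd
prime) and on `m = 2^j`.
-/

open Finset ArithmeticFunction
open scoped ArithmeticFunction.Moebius

theorem sum_divisors_moebius_eq_ite (n : ℕ) :
    ∑ d ∈ n.divisors, (μ d : ℝ) = if n = 1 then 1 else 0 := by
  have h : ∑ d ∈ n.divisors, μ d = if n = 1 then 1 else 0 := by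
    rw [← coe_mul_zeta_apply, moebius_mul_coe_zeta, one_apply]
  exact_mod_cast congrArg (Int.cast : ℤ → ℝ) h

theorem sum_divisors_prime_pow_mul_moebius_mul {p a q : ℕ} (hp : p.Prime) (ha : a ≠ 0)
    (hpq : ¬p ∣ q) (g : ℕ → ℝ) :
    ∑ d ∈ (p ^ a * q).divisors, (μ d : ℝ) * g d =
      ∑ e ∈ q.divisors, (μ e : ℝ) * (g e - g (p * e)) := by
  have hcop : (p ^ a).Coprime q := (hp.coprime_iff_not_dvd.mpr hpq).pow_left a
  rw [Nat.divisors_mul, mul_def, sum_image hcop.mul_injOn_divisors, sum_product_right]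
  refine sum_congr rfl fun e he => ?_
  have hcop_e : ∀ k, (p ^ k).Coprime e := fun k =>
    ((hp.coprime_iff_not_dvd.mpr fun h => hpq (h.trans (Nat.dvd_of_mem_divisors he)))).pow_left k
  rw [Nat.divisors_prime_pow hp, sum_map, sum_range_succ', sum_eq_single 0]
  · have hμ : (μ (p * e) : ℝ) = -μ e := by
      rw [isMultiplicative_moebius.map_mul_of_coprime (by simpa using hcop_e 1),
        moebius_apply_prime hp]
      push_cast
      ring
    simp only [zero_add, Function.Embedding.coeFn_mk, pow_one, hμ, neg_mul, pow_zero, one_mul]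
    ring
  · intro k _ hk
    rw [Function.Embedding.coeFn_mk, isMultiplicative_moebius.map_mul_of_coprime (hcop_e _),
      moebius_apply_prime_pow hp (Nat.succ_ne_zero k), if_neg (by omega)]
    simp
  · exact fun h => absurd (mem_range.mpr (Nat.pos_of_ne_zero ha)) h

theorem mulog2_two_pow_mul {a q : ℕ} (ha : a ≠ 0) (hq : Odd q) :
    mulog2 (2 ^ a * q) =
      2 * Real.log 2 * Λ q - Real.log 2 ^ 2 * if q = 1 then 1 else 0 := by
  rw [mulog2, sum_divisors_prime_pow_mul_moebius_mul Nat.prime_two ha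
    hq.not_two_dvd_nat]
  have hlog : ∀ e ∈ q.divisors, (μ e : ℝ) * (Real.log e ^ 2 - Real.log ((2 * e : ℕ) : ℝ) ^ 2) =
      -(Real.log 2 ^ 2) * μ e - 2 * Real.log 2 * ((μ e : ℝ) * Real.log e) := by
    intro e he
    push_cast
    rw [Real.log_mul two_ne_zero (by exact_mod_cast (Nat.pos_of_mem_divisors he).ne')]
    ring
  have hΛ : ∑ e ∈ q.divisors, (μ e : ℝ) * Real.log e = -Λ q := sum_moebius_mul_log_eq
  rw [sum_congr rfl hlog, sum_sub_distrib, ← mul_sum, ← mul_sum, sum_divisors_moebius_eq_ite, hΛ]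
  split_ifs <;> ring

theorem mulog2_four_mul_sq (m : ℕ) :
    mulog2 (4 * m ^ 2) =
      2 * Real.log 2 * Λ (ordCompl[2] m) - Real.log 2 ^ 2 * if ordCompl[2] m = 1 then 1 else 0 := by
  rcases eq_or_ne m 0 with rfl | hm
  · simp [mulog2]
  obtain ⟨j, q, hq, rfl⟩ := Nat.exists_eq_two_pow_mul_odd hm
  rw [Nat.ordCompl_pow_mul_of_not_dvd j Nat.prime_two hq.not_two_dvd_nat,
    show 4 * (2 ^ j * q) ^ 2 = 2 ^ (2 * j + 2) * q ^ 2 by ring,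
    mulog2_two_pow_mul (by omega) hq.pow, vonMangoldt_apply_pow two_ne_zero]
  simp

open LSeries
open scoped LSeries.notation

theorem cpow_neg_natCast_mul (x : ℂ) (k : ℕ) (s : ℂ) : x ^ (-(k : ℂ) * s) = (x ^ s)⁻¹ ^ k := by
  rw [neg_mul, ← mul_neg, Complex.cpow_nat_mul, Complex.cpow_neg]

theorem natCast_pow_cpow (n k : ℕ) (s : ℂ) : ((n ^ k : ℕ) : ℂ) ^ s = ((n : ℂ) ^ s) ^ k := by
  rw [Nat.cast_pow, ← Complex.natCast_cpow_natCast_mul, Complex.cpow_nat_mul]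

theorem hasSum_inv_two_cpow_pow_succ {s : ℂ} (hs : 0 < s.re) :
    HasSum (fun j : ℕ => ((2 : ℂ) ^ s)⁻¹ ^ (j + 1)) ((2 ^ s - 1)⁻¹) := by
  have hr : ‖((2 : ℂ) ^ s)⁻¹‖ < 1 := by
    have h2 := Complex.norm_natCast_cpow_of_pos two_pos s
    rw [Nat.cast_ofNat] at h2
    rw [norm_inv, h2]
    exact inv_lt_one_of_one_lt₀ (Real.one_lt_rpow one_lt_two hs)
  have hsum := (hasSum_geometric_of_norm_lt_one hr).mul_left ((2 : ℂ) ^ s)⁻¹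
  have h2s : (2 : ℂ) ^ s ≠ 0 := by simp
  rw [show (2 ^ s - 1 : ℂ)⁻¹ = (2 ^ s)⁻¹ * (1 - (2 ^ s)⁻¹)⁻¹ by
    rw [← mul_inv, mul_sub, mul_one, mul_inv_cancel₀ h2s]]
  simpa only [pow_succ'] using hsum

noncomputable def oddPartTerm (h : ℕ → ℂ) (s : ℂ) (m : ℕ) : ℂ :=
  h (ordCompl[2] m) / ((2 * m : ℕ) : ℂ) ^ s

theorem oddPartTerm_two_pow_mul (h : ℕ → ℂ) (s : ℂ) (j : ℕ) {q : ℕ} (hq : Odd q) :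
    oddPartTerm h s (2 ^ j * q) = ((2 : ℂ) ^ s)⁻¹ ^ (j + 1) * term h s q := by
  rw [oddPartTerm, Nat.ordCompl_pow_mul_of_not_dvd j Nat.prime_two hq.not_two_dvd_nat,
    term_of_ne_zero hq.pos.ne', show 2 * (2 ^ j * q) = 2 ^ (j + 1) * q by ring, Nat.cast_mul,
    Complex.natCast_mul_natCast_cpow, natCast_pow_cpow, Nat.cast_ofNat, inv_pow]
  field_simp

theorem Summable.comp_two_mul_add_one {E : Type*} [NormedAddCommGroup E] [CompleteSpace E]
    {f : ℕ → E} (hf : Summable f) : Summable (fun k => f (2 * k + 1)) :=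
  hf.comp_injective ((add_left_injective 1).comp (mul_right_injective₀ two_ne_zero))

theorem injective_two_pow_mul_two_mul_add_one :
    Function.Injective (fun x : ℕ × ℕ => 2 ^ x.1 * (2 * x.2 + 1)) := by
  have hcompl : ∀ j q : ℕ, ordCompl[2] (2 ^ j * (2 * q + 1)) = 2 * q + 1 := fun j q =>
    Nat.ordCompl_pow_mul_of_not_dvd j Nat.prime_two (by omega)
  rintro ⟨j, q⟩ ⟨j', q'⟩ h
  simp only at h
  have hodd : 2 * q + 1 = 2 * q' + 1 := by
    rw [← hcompl j q, ← hcompl j' q', h]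
  rw [hodd] at h
  have hj : j = j' := Nat.pow_right_injective le_rfl (Nat.eq_of_mul_eq_mul_right (by omega) h)
  simp only [Prod.mk.injEq]
  omega

theorem hasSum_oddPartTerm {h : ℕ → ℂ} {s a : ℂ} (hs : 0 < s.re) (hh : LSeriesSummable h s)
    (ha : HasSum (fun q => term h s (2 * q + 1)) a) :
    HasSum (oddPartTerm h s) ((2 ^ s - 1)⁻¹ * a) := by
  have hzero : ∀ m ∉ Set.range (fun x : ℕ × ℕ => 2 ^ x.1 * (2 * x.2 + 1)),
      oddPartTerm h s m = 0 := by
    intro m hm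
    rcases eq_or_ne m 0 with rfl | hm0
    · simp [oddPartTerm, Complex.zero_cpow (Complex.ne_zero_of_re_pos hs)]
    obtain ⟨j, q, ⟨q', rfl⟩, rfl⟩ := Nat.exists_eq_two_pow_mul_odd hm0
    exact absurd ⟨(j, q'), rfl⟩ hm
  rw [← injective_two_pow_mul_two_mul_add_one.hasSum_iff hzero]
  have hodd : Summable (fun q => term h s (2 * q + 1)) := Summable.comp_two_mul_add_one hh
  have hgeom := hasSum_inv_two_cpow_pow_succ hs
  have hprod := hgeom.mul ha (summable_mul_of_summable_norm (R := ℂ)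
    (f := fun j : ℕ => ((2 : ℂ) ^ s)⁻¹ ^ (j + 1)) (g := fun q => term h s (2 * q + 1))
    hgeom.summable.norm hodd.norm)
  have hcomp : oddPartTerm h s ∘ (fun x : ℕ × ℕ => 2 ^ x.1 * (2 * x.2 + 1)) =
      fun x => ((2 : ℂ) ^ s)⁻¹ ^ (x.1 + 1) * term h s (2 * x.2 + 1) :=
    funext fun x => oddPartTerm_two_pow_mul h s x.1 (odd_two_mul_add_one x.2)
  rwa [hcomp]

theorem term_vonMangoldt_prime_pow (s : ℂ) {p k : ℕ} (hp : p.Prime) (hk : k ≠ 0) :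
    term ↗Λ s (p ^ k) = Real.log p * ((p : ℂ) ^ s)⁻¹ ^ k := by
  rw [term_of_ne_zero (pow_ne_zero k hp.ne_zero), vonMangoldt_apply_pow hk,
    vonMangoldt_apply_prime hp, natCast_pow_cpow, div_eq_mul_inv, inv_pow]

theorem exists_two_pow_eq_of_isPrimePow_two_mul {k : ℕ} (h : IsPrimePow (2 * k)) :
    ∃ a, 2 ^ a = k := by
  have hpow := h.minFac_pow_factorization_eq
  rw [(Nat.minFac_eq_two_iff _).mpr (dvd_mul_right 2 k)] at hpow
  obtain ⟨a, ha⟩ : ∃ a, (2 * k).factorization 2 = a + 1 :=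
    Nat.exists_eq_add_one_of_ne_zero fun h0 => by rw [h0, pow_zero] at hpow; omega
  rw [ha, pow_succ'] at hpow
  exact ⟨a, by omega⟩

theorem hasSum_term_vonMangoldt_two_mul {s : ℂ} (hs : 0 < s.re) :
    HasSum (fun k => term ↗Λ s (2 * k)) (Real.log 2 * (2 ^ s - 1)⁻¹) := by
  have hzero : ∀ k ∉ Set.range (fun a : ℕ => 2 ^ a), term ↗Λ s (2 * k) = 0 := by
    intro k hk
    by_contra hne
    refine hk (exists_two_pow_eq_of_isPrimePow_two_mul ?_)
    rw [← vonMangoldt_ne_zero_iff]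
    intro h
    exact hne (by rw [term_def, h]; simp)
  rw [← (Nat.pow_right_injective le_rfl).hasSum_iff hzero]
  have hval : (fun k => term ↗Λ s (2 * k)) ∘ (fun a : ℕ => 2 ^ a) =
      fun a => (Real.log 2 : ℂ) * ((2 : ℂ) ^ s)⁻¹ ^ (a + 1) := by
    funext a
    simp only [Function.comp_apply, ← pow_succ']
    rw [term_vonMangoldt_prime_pow s Nat.prime_two a.succ_ne_zero]
    simp only [Nat.cast_ofNat, Nat.succ_eq_add_one]
  rw [hval]
  exact (hasSum_inv_two_cpow_pow_succ hs).mul_left _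

theorem hasSum_term_vonMangoldt_two_mul_add_one {s : ℂ} (hs : 1 < s.re) :
    HasSum (fun k => term ↗Λ s (2 * k + 1))
      (-deriv riemannZeta s / riemannZeta s - Real.log 2 * (2 ^ s - 1)⁻¹) := by
  have hsum := LSeriesSummable_vonMangoldt hs
  have hall : HasSum (term ↗Λ s) (-deriv riemannZeta s / riemannZeta s) := by
    rw [← ArithmeticFunction.LSeries_vonMangoldt_eq_deriv_riemannZeta_div hs]
    exact hsum.LSeriesHasSum
  have hodd := (Summable.comp_two_mul_add_one hsum).hasSum
  have heven := hasSum_term_vonMangoldt_two_mul (zero_lt_one.trans hs)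
  rw [hall.unique (heven.even_add_odd hodd), add_sub_cancel_left]
  exact hodd

theorem lSeriesSummable_delta (s : ℂ) : LSeriesSummable δ s :=
  (hasSum_ite_eq 1 (1 : ℂ)).summable.congr fun n => (term_delta s n).symm

theorem hasSum_term_delta_two_mul_add_one (s : ℂ) :
    HasSum (fun k => term δ s (2 * k + 1)) 1 := by
  simpa only [term_delta, Nat.add_eq_right, mul_eq_zero, OfNat.ofNat_ne_zero, false_or]
    using hasSum_ite_eq 0 (1 : ℂ)

theorem mulog2_four_mul_sq_div_cpow (s : ℂ) (m : ℕ) :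
    (mulog2 (4 * m ^ 2) : ℂ) / ((2 * m : ℕ) : ℂ) ^ s =
      2 * Real.log 2 * oddPartTerm ↗Λ s m - Real.log 2 ^ 2 * oddPartTerm δ s m := by
  rw [mulog2_four_mul_sq, oddPartTerm, oddPartTerm, delta]
  push_cast [apply_ite ((↑) : ℝ → ℂ)]
  ring

theorem hasSum_mulog2_four_mul_sq_div_cpow {s : ℂ} (hs : 1 < s.re) :
    HasSum (fun m : ℕ => (mulog2 (4 * m ^ 2) : ℂ) / ((2 * m : ℕ) : ℂ) ^ s)
      (2 * Real.log 2 * ((2 ^ s - 1)⁻¹ *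
          (-deriv riemannZeta s / riemannZeta s - Real.log 2 * (2 ^ s - 1)⁻¹)) -
        Real.log 2 ^ 2 * (2 ^ s - 1)⁻¹) := by
  have hs₀ : 0 < s.re := zero_lt_one.trans hs
  simp only [mulog2_four_mul_sq_div_cpow]
  simpa only [mul_one] using ((hasSum_oddPartTerm hs₀ (LSeriesSummable_vonMangoldt hs)
    (hasSum_term_vonMangoldt_two_mul_add_one hs)).mul_left _).sub
    ((hasSum_oddPartTerm hs₀ (lSeriesSummable_delta s)
      (hasSum_term_delta_two_mul_add_one s)).mul_left _)

theorem sum_range_oddPartTerm_delta (s : ℂ) (N : ℕ) :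
    ∑ m ∈ range (N + 1), oddPartTerm δ s m =
      ∑ j ∈ (range (N + 1)).filter (fun j => 2 ^ j ≤ N), (2 : ℂ) ^ (-((j : ℂ) + 1) * s) := by
  symm
  refine sum_of_injOn (fun j => 2 ^ j) (Nat.pow_right_injective le_rfl).injOn ?_ ?_ ?_
  · intro j hj
    simp only [coe_filter, mem_range, Set.mem_ofPred_eq, coe_range, Set.mem_Iio] at hj ⊢
    omega
  · intro m hm hnot
    by_contra hne
    have h1 : ordCompl[2] m = 1 := by
      by_contra h
      exact hne (by simp [oddPartTerm, delta, h])
    have hm2 : 2 ^ m.factorization 2 = m := by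
      simpa [h1] using Nat.ordProj_mul_ordCompl_eq_self m 2
    refine hnot ⟨m.factorization 2, ?_, hm2⟩
    have := Nat.lt_two_pow_self (n := m.factorization 2)
    simp only [coe_filter, mem_range, Set.mem_ofPred_eq] at hm ⊢
    omega
  · intro j _
    have h := oddPartTerm_two_pow_mul δ s j odd_one
    rw [mul_one] at h
    rw [h, term_delta, if_pos rfl, mul_one, ← cpow_neg_natCast_mul]
    push_cast
    rfl

theorem two_pow_mul_prime_pow_inj {j k p j' k' p' : ℕ} (hp : p.Prime) (hp2 : p ≠ 2) (hk : k ≠ 0)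
    (hp' : p'.Prime) (hp2' : p' ≠ 2) (hk' : k' ≠ 0) (h : 2 ^ j * p ^ k = 2 ^ j' * p' ^ k') :
    j = j' ∧ k = k' ∧ p = p' := by
  have hpk : p ^ k = p' ^ k' := by
    rw [← Nat.ordCompl_pow_mul_of_not_dvd j Nat.prime_two
        (hp.odd_of_ne_two hp2).pow.not_two_dvd_nat,
      ← Nat.ordCompl_pow_mul_of_not_dvd j' Nat.prime_two
        (hp'.odd_of_ne_two hp2').pow.not_two_dvd_nat, h]
  obtain ⟨rfl, rfl⟩ := Nat.Prime.pow_inj' hp hp' hk hk' hpk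
  exact ⟨Nat.pow_right_injective le_rfl (Nat.eq_of_mul_eq_mul_right (pow_pos hp.pos k) h),
    rfl, rfl⟩

theorem exists_two_pow_mul_prime_pow_eq {m : ℕ} (h : Λ (ordCompl[2] m) ≠ 0) :
    ∃ j k p, p.Prime ∧ p ≠ 2 ∧ k ≠ 0 ∧ 2 ^ j * p ^ k = m := by
  have hm0 : m ≠ 0 := by rintro rfl; simp at h
  obtain ⟨p, k, hp, hk, hpk⟩ := (isPrimePow_nat_iff _).mp (vonMangoldt_ne_zero_iff.mp h)
  refine ⟨m.factorization 2, k, p, hp, ?_, hk.ne', hpk ▸ Nat.ordProj_mul_ordCompl_eq_self m 2⟩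
  rintro rfl
  exact Nat.not_dvd_ordCompl Nat.prime_two hm0 (hpk ▸ dvd_pow_self 2 hk.ne')

theorem sum_range_oddPartTerm_vonMangoldt (s : ℂ) (N : ℕ) :
    ∑ m ∈ range (N + 1), oddPartTerm ↗Λ s m =
      ∑ x ∈ (range (N + 1) ×ˢ range (N + 1) ×ˢ range (N + 1)).filter
          (fun x => x.2.2.Prime ∧ x.2.2 ≠ 2 ∧ 1 ≤ x.2.1 ∧ 2 ^ x.1 * x.2.2 ^ x.2.1 ≤ N),
        (Real.log x.2.2 : ℂ) * (2 : ℂ) ^ (-((x.1 : ℂ) + 1) * s) *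
          (x.2.2 : ℂ) ^ (-(x.2.1 : ℂ) * s) := by
  symm
  refine sum_of_injOn (fun x => 2 ^ x.1 * x.2.2 ^ x.2.1) ?_ ?_ ?_ ?_
  · rintro ⟨j, k, p⟩ hx ⟨j', k', p'⟩ hx' h
    simp only [coe_filter, mem_product, mem_range, Set.mem_ofPred_eq] at hx hx' h
    obtain ⟨rfl, rfl, rfl⟩ := two_pow_mul_prime_pow_inj hx.2.1 hx.2.2.1 (by omega)
      hx'.2.1 hx'.2.2.1 (by omega) h
    rfl
  · intro x hx
    simp only [coe_filter, mem_product, mem_range, Set.mem_ofPred_eq, coe_range,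
      Set.mem_Iio] at hx ⊢
    omega
  · intro m hm hnot
    by_contra hne
    obtain ⟨j, k, p, hp, hp2, hk, rfl⟩ :=
      exists_two_pow_mul_prime_pow_eq (m := m) fun h => hne (by simp [oddPartTerm, h])
    refine hnot ⟨(j, k, p), ?_, rfl⟩
    have := Nat.lt_two_pow_self (n := j)
    have := Nat.lt_pow_self (n := k) hp.one_lt
    have := Nat.le_self_pow hk p
    have := Nat.le_mul_of_pos_right (2 ^ j) (pow_pos hp.pos k)
    have := Nat.le_mul_of_pos_left (p ^ k) (pow_pos two_pos j)
    simp only [coe_filter, mem_product, mem_range, Set.mem_ofPred_eq] at hm ⊢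
    exact ⟨⟨by omega, by omega, by omega⟩, hp, hp2, by omega, by omega⟩
  · rintro ⟨j, k, p⟩ hx
    obtain ⟨-, hp, hp2, hk, -⟩ := mem_filter.mp hx
    rw [oddPartTerm_two_pow_mul _ s j (hp.odd_of_ne_two hp2).pow,
      term_vonMangoldt_prime_pow s hp (Nat.one_le_iff_ne_zero.mp hk), ← cpow_neg_natCast_mul,
      ← cpow_neg_natCast_mul]
    push_cast
    ring

theorem A_closed_form_odd_general (D : ℕ) (w : ℂ) (hw : 1 / 2 < w.re) :
    ∑' n : ℕ, (mulog2 (4 * (n + D / 2 + 1) ^ 2) : ℂ) /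
        ((2 * (n + D / 2 + 1) : ℕ) : ℂ) ^ (2 * w) =
      -2 * (Real.log 2 : ℂ) * (((2 : ℂ) ^ (2 * w) - 1)⁻¹ *
          (deriv riemannZeta (2 * w) / riemannZeta (2 * w) +
            (Real.log 2 : ℂ) / ((2 : ℂ) ^ (2 * w) - 1)) +
        ∑ x ∈ (Finset.range (D / 2 + 1) ×ˢ Finset.range (D / 2 + 1) ×ˢ
            Finset.range (D / 2 + 1)).filter
            (fun x => Nat.Prime x.2.2 ∧ x.2.2 ≠ 2 ∧ 1 ≤ x.2.1 ∧
              2 ^ x.1 * x.2.2 ^ x.2.1 ≤ D / 2),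
          (Real.log x.2.2 : ℂ) * (2 : ℂ) ^ (-2 * ((x.1 : ℂ) + 1) * w) *
            (x.2.2 : ℂ) ^ (-2 * (x.2.1 : ℂ) * w)) -
      (Real.log 2 : ℂ) ^ 2 * (((2 : ℂ) ^ (2 * w) - 1)⁻¹ -
        ∑ j ∈ (Finset.range (D / 2 + 1)).filter (fun j => 2 ^ j ≤ D / 2),
          (2 : ℂ) ^ (-2 * ((j : ℂ) + 1) * w)) := by
  have hs : 1 < (2 * w).re := by
    simp only [Complex.mul_re, Complex.re_ofNat, Complex.im_ofNat, zero_mul, sub_zero]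
    linarith
  have htail := (hasSum_nat_add_iff' (D / 2 + 1)).mpr (hasSum_mulog2_four_mul_sq_div_cpow hs)
  simp only [← add_assoc] at htail
  have hexp : ∀ a : ℂ, -2 * a * w = -a * (2 * w) := fun a => by ring
  rw [htail.tsum_eq, sum_congr rfl fun m _ => mulog2_four_mul_sq_div_cpow (2 * w) m,
    sum_sub_distrib, ← mul_sum, ← mul_sum, sum_range_oddPartTerm_vonMangoldt,
    sum_range_oddPartTerm_delta]
  simp only [hexp]
  ring

theorem A_closed_form_odd (D : ℕ) (hD : 0 < D) (hodd : Odd D) (w : ℂ) (hw : 1 / 2 < w.re) :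
    ∑' n : ℕ, (mulog2 (4 * (n + D / 2 + 1) ^ 2) : ℂ) /
        ((2 * (n + D / 2 + 1) : ℕ) : ℂ) ^ (2 * w) =
      -2 * (Real.log 2 : ℂ) * (((2 : ℂ) ^ (2 * w) - 1)⁻¹ *
          (deriv riemannZeta (2 * w) / riemannZeta (2 * w) +
            (Real.log 2 : ℂ) / ((2 : ℂ) ^ (2 * w) - 1)) +
        ∑ x ∈ (Finset.range (D / 2 + 1) ×ˢ Finset.range (D / 2 + 1) ×ˢ
            Finset.range (D / 2 + 1)).filter
            (fun x => Nat.Prime x.2.2 ∧ x.2.2 ≠ 2 ∧ 1 ≤ x.2.1 ∧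
              2 ^ x.1 * x.2.2 ^ x.2.1 ≤ D / 2),
          (Real.log x.2.2 : ℂ) * (2 : ℂ) ^ (-2 * ((x.1 : ℂ) + 1) * w) *
            (x.2.2 : ℂ) ^ (-2 * (x.2.1 : ℂ) * w)) -
      (Real.log 2 : ℂ) ^ 2 * (((2 : ℂ) ^ (2 * w) - 1)⁻¹ -
        ∑ j ∈ (Finset.range (D / 2 + 1)).filter (fun j => 2 ^ j ≤ D / 2),
          (2 : ℂ) ^ (-2 * ((j : ℂ) + 1) * w)) :=
  A_closed_form_odd_general D w hw
end

section
/- Let D be a positive even integer with D mod 6 ≠ 4 and let s be a complex number with Re(s) > −1/2. Then the series ∑_{a=⌊D/6⌋+1}^∞ ( (9(2a−1)² − D²)^{−s} − (9(2a−1)²)^{−s} ) converges absolutely. -/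
/-!
Writing `X = 9(2a-1)² - D²` and `Y = 9(2a-1)²`, the mean value theorem for `t ↦ t^{-s}` on `[X, Y]`
bounds each term by `‖s‖ D² X^{-Re s - 1}`. As `D` is even with `D mod 6 ≠ 4`, `D ≤ 6⌊D/6⌋ + 2`,
hence `3(2a-1) ≥ D + (a - ⌊D/6⌋)`: `X` grows like the square of the summation index, so the terms
are `O(a^{-2 Re s - 2})`, which is summable exactly when `Re s > -1/2`.
-/

open Set

lemma norm_ofReal_cpow_sub_cpow_le {w : ℂ} (hw : w.re ≤ 1) {x y : ℝ} (hx : 0 < x)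
    (hxy : x ≤ y) :
    ‖(x : ℂ) ^ w - (y : ℂ) ^ w‖ ≤ ‖w‖ * x ^ (w.re - 1) * (y - x) := by
  have hderiv : ∀ t ∈ Icc x y, HasDerivWithinAt (fun t : ℝ => (t : ℂ) ^ w)
      (w * (t : ℂ) ^ (w - 1)) (Icc x y) t := fun t ht =>
    ((Complex.hasStrictDerivAt_cpow_const (Complex.ofReal_mem_slitPlane.2
      (hx.trans_le ht.1))).hasDerivAt.comp_ofReal).hasDerivWithinAt
  have hbound : ∀ t ∈ Ico x y, ‖w * (t : ℂ) ^ (w - 1)‖ ≤ ‖w‖ * x ^ (w.re - 1) := by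
    intro t ht
    rw [norm_mul, Complex.norm_cpow_eq_rpow_re_of_pos (hx.trans_le ht.1), Complex.sub_re,
      Complex.one_re]
    exact mul_le_mul_of_nonneg_left (Real.rpow_le_rpow_of_nonpos hx ht.1 (by linarith))
      (norm_nonneg w)
  rw [norm_sub_rev]
  exact norm_image_sub_le_of_norm_deriv_le_segment' hderiv hbound y (right_mem_Icc.2 hxy)

lemma summable_nat_add_one_rpow {p : ℝ} (hp : p < -1) :
    Summable fun a : ℕ => ((a : ℝ) + 1) ^ p := by
  have h := (summable_nat_add_iff (f := fun n : ℕ => (n : ℝ) ^ p) 1).2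
    (Real.summable_nat_rpow.2 hp)
  simpa using h

lemma summable_norm_ofReal_cpow_sub_cpow {s : ℂ} (hs : -(1 / 2) < s.re) {x y : ℕ → ℝ} {C : ℝ}
    (hx : ∀ a : ℕ, ((a : ℝ) + 1) ^ 2 ≤ x a) (hxy : ∀ a, x a ≤ y a) (hyx : ∀ a, y a - x a ≤ C) :
    Summable fun a => ‖(x a : ℂ) ^ (-s) - (y a : ℂ) ^ (-s)‖ := by
  have hC : 0 ≤ C := (sub_nonneg.2 (hxy 0)).trans (hyx 0)
  have hterm : ∀ a : ℕ, ‖(x a : ℂ) ^ (-s) - (y a : ℂ) ^ (-s)‖ ≤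
      ‖s‖ * C * ((a : ℝ) + 1) ^ (2 * (-s.re - 1)) := by
    intro a
    have ha : (0 : ℝ) < (a : ℝ) + 1 := by positivity
    have hxa : 0 < x a := (pow_pos ha 2).trans_le (hx a)
    have hre : (-s).re ≤ 1 := by rw [Complex.neg_re]; linarith
    calc ‖(x a : ℂ) ^ (-s) - (y a : ℂ) ^ (-s)‖
        ≤ ‖s‖ * x a ^ (-s.re - 1) * (y a - x a) := by
          simpa using norm_ofReal_cpow_sub_cpow_le hre hxa (hxy a)
      _ ≤ ‖s‖ * (((a : ℝ) + 1) ^ 2) ^ (-s.re - 1) * C := by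
          refine mul_le_mul (mul_le_mul_of_nonneg_left ?_ (norm_nonneg s)) (hyx a)
            (sub_nonneg.2 (hxy a)) (by positivity)
          exact Real.rpow_le_rpow_of_nonpos (by positivity) (hx a) (by linarith)
      _ = ‖s‖ * C * ((a : ℝ) + 1) ^ (2 * (-s.re - 1)) := by
          rw [← Real.rpow_natCast, ← Real.rpow_mul ha.le]
          push_cast
          ring
  exact .of_nonneg_of_le (fun _ => norm_nonneg _) hterm
    ((summable_nat_add_one_rpow (by linarith)).mul_left _)

lemma sq_le_nine_mul_sq_sub_sq {a n D : ℝ} (ha : 0 ≤ a) (hD : 0 ≤ D) (h : D + a ≤ 3 * n) :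
    a ^ 2 ≤ 9 * n ^ 2 - D ^ 2 := by
  nlinarith

theorem qD_abs_convergence_even_general (D : ℕ) (heven : 2 ∣ D) (hmod : D % 6 ≠ 4)
    (s : ℂ) (hs : -(1 / 2) < s.re) :
    Summable (fun a : ℕ =>
      ‖(9 * ((2 * (a + D / 6 + 1) - 1 : ℕ) : ℂ) ^ 2 - (D : ℂ) ^ 2) ^ (-s) -
        (9 * ((2 * (a + D / 6 + 1) - 1 : ℕ) : ℂ) ^ 2) ^ (-s)‖) := by
  have hn : ∀ a : ℕ, D + (a + 1) ≤ 3 * (2 * (a + D / 6 + 1) - 1) := fun a => by omega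
  refine (summable_norm_ofReal_cpow_sub_cpow hs (C := (D : ℝ) ^ 2)
    (x := fun a => 9 * ((2 * (a + D / 6 + 1) - 1 : ℕ) : ℝ) ^ 2 - (D : ℝ) ^ 2)
    (y := fun a => 9 * ((2 * (a + D / 6 + 1) - 1 : ℕ) : ℝ) ^ 2)
    (fun a => sq_le_nine_mul_sq_sub_sq (by positivity) (Nat.cast_nonneg D)
      (by exact_mod_cast hn a))
    (fun a => sub_le_self _ (by positivity)) (fun a => (sub_sub_cancel _ _).le)).congr fun a => ?_
  push_cast
  rfl

theorem qD_abs_convergence_even (D : ℕ) (hD : 0 < D) (heven : 2 ∣ D) (hmod : D % 6 ≠ 4)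
    (s : ℂ) (hs : -(1 / 2) < s.re) :
    Summable (fun a : ℕ =>
      ‖(9 * ((2 * (a + D / 6 + 1) - 1 : ℕ) : ℂ) ^ 2 - (D : ℂ) ^ 2) ^ (-s) -
        (9 * ((2 * (a + D / 6 + 1) - 1 : ℕ) : ℂ) ^ 2) ^ (-s)‖) :=
  qD_abs_convergence_even_general D heven hmod s hs
end
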